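/- Let op_N(h) = (op_N(a) - op_N(b))/2 on ℂᴺ with ℓ_x = ℓ_ξ (notation as above). Then F⁻¹ op_N(h) F = -op_N(h), and consequently the spectrum of op_N(h) is symmetric about zero: E ∈ σ(op_N(h)) implies -E ∈ σ(op_N(h)). -/

import Mathlib

/-!
Conjugation by the discrete Fourier transform `F` exchanges shifts and modulations:
`T^{a,0} F = F T^{0,a}` and `F T^{a,0} = T^{0,-a} F`. Since `op_N(a)` and `op_N(b)` are the same
absolutely convergent series in the symmetric combinations `T^{n,0} + T^{-n,0}` and
`T^{0,n} + T^{0,-n}` respectively, the signs drop out and `F` intertwines them both ways: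
`op_N(a) F = F op_N(b)` and `op_N(b) F = F op_N(a)`. Hence `op_N(h) F = F (-op_N(h))`; `F` is
invertible because it is a nonzero multiple of `ZMod.dft`, and similar matrices have the same
spectrum.
-/

/-- Matrix of op_N(a) = ℓ²/12 + (ℓ²/(2π²))∑_{n≥1}((-1)ⁿ/n²)(T^{n,0}+T^{-n,0}),
with (T^{n,0})_{k,l} = δ_{k+n,l}. -/
noncomputable def opAMat (N : ℕ) [NeZero N] (ℓ : ℝ) : Matrix (ZMod N) (ZMod N) ℂ :=
  fun k l => ((ℓ^2/12 : ℝ) : ℂ) * (if k = l then 1 else 0)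
    + ((ℓ^2/(2*Real.pi^2) : ℝ) : ℂ) * ∑' n : ℕ,
        ((-1 : ℂ)^(n+1) / ((n : ℂ)+1)^2) *
          ((if k + ((n+1 : ℕ) : ZMod N) = l then 1 else 0)
            + (if k - ((n+1 : ℕ) : ZMod N) = l then 1 else 0))

/-- Matrix of op_N(b) = ℓ²/12 + (ℓ²/(2π²))∑_{n≥1}((-1)ⁿ/n²)(T^{0,n}+T^{0,-n}),
with (T^{0,n})_{k,l} = e^{-2πikn/N} δ_{k,l}. -/
noncomputable def opBMat (N : ℕ) [NeZero N] (ℓ : ℝ) : Matrix (ZMod N) (ZMod N) ℂ :=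
  fun k l => (if k = l then
      ((ℓ^2/12 : ℝ) : ℂ) + ((ℓ^2/(2*Real.pi^2) : ℝ) : ℂ) * ∑' n : ℕ,
        ((-1 : ℂ)^(n+1) / ((n : ℂ)+1)^2) *
          (Complex.exp (-(2 * Real.pi * Complex.I * (k.val : ℂ) * ((n : ℂ)+1)) / N)
            + Complex.exp ((2 * Real.pi * Complex.I * (k.val : ℂ) * ((n : ℂ)+1)) / N))
    else 0)

/-- Matrix of the discrete Fourier transform F. -/
noncomputable def dftMat (N : ℕ) [NeZero N] : Matrix (ZMod N) (ZMod N) ℂ :=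
  fun k l => ((Real.sqrt N : ℂ))⁻¹ *
    Complex.exp (-(2 * Real.pi * Complex.I * (k.val : ℂ) * (l.val : ℂ)) / N)

/-- Matrix of op_N(h) = (op_N(a) - op_N(b))/2 with ℓ_x = ℓ_ξ = ℓ. -/
noncomputable def opHMat (N : ℕ) [NeZero N] (ℓ : ℝ) : Matrix (ZMod N) (ZMod N) ℂ :=
  (1/2 : ℂ) • (opAMat N ℓ - opBMat N ℓ)

open Complex ZMod

section Spectrum

variable {R A : Type*} [CommRing R] [Ring A] [Algebra R A]

theorem spectrum.neg_mem_of_units_conj_eq_neg {a : A} (u : Aˣ) (h : ↑u⁻¹ * a * ↑u = -a)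
    {E : R} (hE : E ∈ spectrum R a) : -E ∈ spectrum R a := by
  rw [← spectrum.units_conjugate' (u := u), h, ← spectrum.neg_eq]
  exact Set.neg_mem_neg.mpr hE

end Spectrum

/-- The coefficient `(-1)ⁿ/n²` at index `n+1`. With the prefactors `ℓ²/12` and `ℓ²/(2π²)` of
`sqSymbolOp` these give the Fourier series of the `ℓ`-periodisation of `x²`. -/
noncomputable def sqFourierCoeff (n : ℕ) : ℂ := (-1) ^ (n + 1) / ((n : ℂ) + 1) ^ 2

theorem summable_sqFourierCoeff_smul {ι E : Type*} [Finite ι] [NormedAddCommGroup E]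
    [NormedSpace ℂ E] [CompleteSpace E] (X : ι → E) (s : ℕ → ι) :
    Summable fun n => sqFourierCoeff n • X (s n) := by
  obtain ⟨C, hC⟩ := (Set.finite_range X).isBounded.exists_norm_le
  have hsq : Summable fun n : ℕ => 1 / ((n : ℝ) + 1) ^ 2 := by
    simpa using (summable_nat_add_iff 1).mpr (Real.summable_one_div_nat_pow.mpr one_lt_two)
  refine Summable.of_norm_bounded (hsq.mul_right C) fun n => ?_
  rw [norm_smul, sqFourierCoeff, norm_div, norm_pow, norm_neg, norm_one, one_pow, norm_pow]
  have hnorm : ‖(n : ℂ) + 1‖ = (n : ℝ) + 1 := by exact_mod_cast Complex.norm_natCast (n + 1)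
  rw [hnorm]
  gcongr
  exact hC _ ⟨s n, rfl⟩

open scoped Matrix

variable {N : ℕ} [NeZero N]

theorem ZMod.stdAddChar_mul_intCast (k : ZMod N) (j : ℤ) :
    stdAddChar (k * (j : ZMod N)) = exp (2 * Real.pi * I * k.val * j / N) := by
  have : k * (j : ZMod N) = ((k.val * j : ℤ) : ZMod N) := by push_cast [natCast_zmod_val]; rfl
  rw [this, stdAddChar_coe]
  push_cast
  ring_nf

theorem dftMat_apply (k l : ZMod N) :
    dftMat N k l = (Real.sqrt N : ℂ)⁻¹ * stdAddChar (-(k * l)) := by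
  have : -(k * l) = k * ((-(l.val : ℤ) : ℤ) : ZMod N) := by push_cast [natCast_zmod_val]; ring
  rw [dftMat, this, stdAddChar_mul_intCast]
  congr 2
  push_cast
  ring

theorem dftMat_mulVec (Φ : ZMod N → ℂ) : dftMat N *ᵥ Φ = (Real.sqrt N : ℂ)⁻¹ • 𝓕 Φ := by
  ext k
  simp only [Matrix.mulVec, dotProduct, dftMat_apply, dft_apply, Pi.smul_apply, smul_eq_mul,
    Finset.mul_sum, mul_comm k, mul_assoc]

theorem isUnit_dftMat : IsUnit (dftMat N) := by
  have hN : (Real.sqrt N : ℂ)⁻¹ ≠ 0 := by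
    simpa using (Real.sqrt_pos.mpr (Nat.cast_pos.mpr (NeZero.pos N))).ne'
  rw [← Matrix.mulVec_injective_iff_isUnit, funext dftMat_mulVec]
  exact (smul_right_injective _ hN).comp dft.injective

/-- The cyclic shift `T^{a,0}`. -/
def shiftMat (a : ZMod N) : Matrix (ZMod N) (ZMod N) ℂ :=
  Matrix.of fun k l => if k + a = l then 1 else 0

/-- The modulation `T^{0,-a}`. -/
noncomputable def modMat (a : ZMod N) : Matrix (ZMod N) (ZMod N) ℂ :=
  Matrix.diagonal fun k => stdAddChar (k * a)

theorem shiftMat_mul_dftMat (a : ZMod N) : shiftMat a * dftMat N = dftMat N * modMat (-a) := by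
  ext k l
  rw [modMat, Matrix.mul_diagonal, Matrix.mul_apply]
  simp only [shiftMat, Matrix.of_apply, ite_mul, one_mul, zero_mul, Finset.sum_ite_eq,
    Finset.mem_univ, if_true, dftMat_apply, mul_assoc, ← AddChar.map_add_eq_mul]
  ring_nf

theorem dftMat_mul_shiftMat (a : ZMod N) : dftMat N * shiftMat a = modMat a * dftMat N := by
  ext k l
  rw [modMat, Matrix.diagonal_mul, Matrix.mul_apply]
  simp only [shiftMat, Matrix.of_apply, mul_ite, mul_one, mul_zero, ← eq_sub_iff_add_eq,
    Finset.sum_ite_eq', Finset.mem_univ, if_true, dftMat_apply]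
  rw [mul_left_comm, ← AddChar.map_add_eq_mul]
  ring_nf

theorem Matrix.tsum_apply {ι m n R : Type*} [AddCommMonoid R] [TopologicalSpace R] [T2Space R]
    {f : ι → Matrix m n R} (hf : Summable f) (i : m) (j : n) :
    (∑' x, f x) i j = ∑' x, f x i j :=
  (Pi.hasSum.mp (Pi.hasSum.mp hf.hasSum i) j).tsum_eq.symm

theorem summable_sqFourierCoeff_smul_matrix (X : ZMod N → Matrix (ZMod N) (ZMod N) ℂ) :
    Summable fun n : ℕ => sqFourierCoeff n • X ((n + 1 : ℕ) : ZMod N) :=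
  Pi.summable.mpr fun k => Pi.summable.mpr fun l =>
    summable_sqFourierCoeff_smul (fun a => X a k l) fun n => ((n + 1 : ℕ) : ZMod N)

/-- `op_N` of the periodised `x²`, expanded in its Fourier series, where `X a` stands for the
quantisation of the exponential of frequency `a`. -/
noncomputable def sqSymbolOp (ℓ : ℝ) (X : ZMod N → Matrix (ZMod N) (ZMod N) ℂ) :
    Matrix (ZMod N) (ZMod N) ℂ :=
  ((ℓ ^ 2 / 12 : ℝ) : ℂ) • 1 + ((ℓ ^ 2 / (2 * Real.pi ^ 2) : ℝ) : ℂ) •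
    ∑' n : ℕ, sqFourierCoeff n • X ((n + 1 : ℕ) : ZMod N)

theorem sqSymbolOp_mul_of_mul_eq (ℓ : ℝ) {X Y : ZMod N → Matrix (ZMod N) (ZMod N) ℂ}
    (M : Matrix (ZMod N) (ZMod N) ℂ) (h : ∀ a, X a * M = M * Y a) :
    sqSymbolOp ℓ X * M = M * sqSymbolOp ℓ Y := by
  have hX := summable_sqFourierCoeff_smul_matrix X
  have hY := summable_sqFourierCoeff_smul_matrix Y
  simp only [sqSymbolOp, add_mul, mul_add, Matrix.smul_mul, Matrix.mul_smul, Matrix.one_mul,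
    Matrix.mul_one, ← hX.tsum_mul_right, ← hY.tsum_mul_left, h]

theorem opAMat_eq_sqSymbolOp (ℓ : ℝ) :
    opAMat N ℓ = sqSymbolOp ℓ fun a => shiftMat a + shiftMat (-a) := by
  have hX := summable_sqFourierCoeff_smul_matrix fun a : ZMod N => shiftMat a + shiftMat (-a)
  ext k l
  rw [sqSymbolOp, Matrix.add_apply, Matrix.smul_apply, Matrix.smul_apply, Matrix.tsum_apply hX]
  simp [opAMat, shiftMat, sqFourierCoeff, Matrix.one_apply, sub_eq_add_neg]

theorem opBMat_eq_sqSymbolOp (ℓ : ℝ) :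
    opBMat N ℓ = sqSymbolOp ℓ fun a => modMat (-a) + modMat a := by
  have hX := summable_sqFourierCoeff_smul_matrix fun a : ZMod N => modMat (-a) + modMat a
  ext k l
  rw [sqSymbolOp, Matrix.add_apply, Matrix.smul_apply, Matrix.smul_apply, Matrix.tsum_apply hX]
  by_cases hkl : k = l
  · subst hkl
    simp only [opBMat, modMat, if_true, Matrix.one_apply_eq, Matrix.add_apply, Matrix.smul_apply,
      Matrix.diagonal_apply_eq, smul_eq_mul, mul_one, sqFourierCoeff]
    congr 3 with n
    have hpos := stdAddChar_mul_intCast k (n + 1 : ℕ)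
    have hneg := stdAddChar_mul_intCast k (-(n + 1 : ℕ))
    push_cast at hpos hneg ⊢
    rw [hpos, hneg]
    ring_nf
  · simp [opBMat, modMat, hkl]

theorem opAMat_mul_dftMat (ℓ : ℝ) : opAMat N ℓ * dftMat N = dftMat N * opBMat N ℓ := by
  rw [opAMat_eq_sqSymbolOp, opBMat_eq_sqSymbolOp]
  refine sqSymbolOp_mul_of_mul_eq ℓ _ fun a => ?_
  rw [Matrix.add_mul, Matrix.mul_add, shiftMat_mul_dftMat, shiftMat_mul_dftMat, neg_neg]

theorem opBMat_mul_dftMat (ℓ : ℝ) : opBMat N ℓ * dftMat N = dftMat N * opAMat N ℓ := by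
  rw [opAMat_eq_sqSymbolOp, opBMat_eq_sqSymbolOp]
  refine sqSymbolOp_mul_of_mul_eq ℓ _ fun a => ?_
  rw [Matrix.add_mul, Matrix.mul_add, dftMat_mul_shiftMat, dftMat_mul_shiftMat, add_comm]

theorem dft_conj_opH_and_spectrum_symm_general (N : ℕ) [NeZero N] (ℓ : ℝ) :
    (dftMat N)⁻¹ * opHMat N ℓ * dftMat N = -opHMat N ℓ
    ∧ ∀ E : ℂ, E ∈ spectrum ℂ (opHMat N ℓ) → -E ∈ spectrum ℂ (opHMat N ℓ) := by
  have hH : opHMat N ℓ * dftMat N = dftMat N * -opHMat N ℓ := by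
    rw [opHMat, Matrix.smul_mul, Matrix.sub_mul, opAMat_mul_dftMat, opBMat_mul_dftMat,
      Matrix.mul_neg, Matrix.mul_smul, Matrix.mul_sub, ← smul_neg, neg_sub]
  have hconj : (dftMat N)⁻¹ * opHMat N ℓ * dftMat N = -opHMat N ℓ := by
    rw [Matrix.mul_assoc, hH, Matrix.nonsing_inv_mul_cancel_left _ _
      ((Matrix.isUnit_iff_isUnit_det _).mp isUnit_dftMat)]
  refine ⟨hconj, fun E hE => ?_⟩
  exact spectrum.neg_mem_of_units_conj_eq_neg isUnit_dftMat.unit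
    (by rwa [Matrix.coe_units_inv, IsUnit.unit_spec]) hE

/-- F⁻¹ op_N(h) F = -op_N(h), and hence the spectrum of op_N(h) is
symmetric about zero. -/
theorem dft_conj_opH_and_spectrum_symm (N : ℕ) [NeZero N] (ℓ : ℝ) (hℓ : 0 < ℓ) :
    (dftMat N)⁻¹ * opHMat N ℓ * dftMat N = -opHMat N ℓ
    ∧ ∀ E : ℂ, E ∈ spectrum ℂ (opHMat N ℓ) → -E ∈ spectrum ℂ (opHMat N ℓ) :=
  dft_conj_opH_and_spectrum_symm_general N ℓ
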